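/- arXiv:1312.7274 — 3 statements merged into one kernel-verified Lean document; each statement's English description precedes it below -/
import Mathlib

section
/- If ∑_{j=1}^{m} Mⱼ ⊗ Nⱼ = ∑_{i=1}^{n} Aᵢ ⊗ Bᵢ (as matrices), then for any matrix K, ∑_{j=1}^{m} Mⱼ ⊗ K ⊗ Nⱼ = ∑_{i=1}^{n} Aᵢ ⊗ K ⊗ Bᵢ. -/
open Matrix Kronecker

/-- If ∑ⱼ Mⱼ ⊗ Nⱼ = ∑ᵢ Aᵢ ⊗ Bᵢ then ∑ⱼ Mⱼ ⊗ K ⊗ Nⱼ = ∑ᵢ Aᵢ ⊗ K ⊗ Bᵢ. -/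
theorem stmt2 (p r t u q s m n : ℕ)
    (M : Fin m → Matrix (Fin p) (Fin r) ℂ) (N : Fin m → Matrix (Fin t) (Fin u) ℂ)
    (A : Fin n → Matrix (Fin p) (Fin r) ℂ) (B : Fin n → Matrix (Fin t) (Fin u) ℂ)
    (K : Matrix (Fin q) (Fin s) ℂ)
    (h : ∑ j : Fin m, M j ⊗ₖ N j = ∑ i : Fin n, A i ⊗ₖ B i) :
    ∑ j : Fin m, (M j ⊗ₖ K) ⊗ₖ N j = ∑ i : Fin n, (A i ⊗ₖ K) ⊗ₖ B i := by
  ext ⟨⟨a, b⟩, c⟩ ⟨⟨d, e⟩, f⟩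
  have h' := congrFun (congrFun h (a, c)) (d, f)
  simp only [Matrix.sum_apply, kroneckerMap_apply] at h' ⊢
  calc ∑ j : Fin m, M j a d * K b e * N j c f
      = (∑ j : Fin m, M j a d * N j c f) * K b e := by
        rw [Finset.sum_mul]; congr 1; ext j; ring
    _ = (∑ i : Fin n, A i a d * B i c f) * K b e := by rw [h']
    _ = ∑ i : Fin n, A i a d * K b e * B i c f := by
        rw [Finset.sum_mul]; congr 1; ext i; ring
end

section
/- For every n ≥ 1, the tensor commutation matrix S_{2ⁿ⊗2ⁿ} equals (1/2ⁿ) ∑_{i₁,...,iₙ=0}^{3} (σ_{i₁}⊗⋯⊗σ_{iₙ}) ⊗ (σ_{i₁}⊗⋯⊗σ_{iₙ}). -/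
open Matrix Kronecker

noncomputable def pauli : Fin 4 → Matrix (Fin 2) (Fin 2) ℂ :=
  ![1, !![0, 1; 1, 0], !![0, -Complex.I; Complex.I, 0], !![1, 0; 0, -1]]

noncomputable def pauliTens (n : ℕ) (i : Fin n → Fin 4) :
    Matrix (Fin n → Fin 2) (Fin n → Fin 2) ℂ :=
  fun x y => ∏ k : Fin n, pauli (i k) (x k) (y k)

lemma pauli_key (a b c d : Fin 2) :
    ∑ j : Fin 4, pauli j a b * pauli j c d =
      if a = d ∧ c = b then 2 else 0 := by
  fin_cases a <;> fin_cases b <;> fin_cases c <;> fin_cases d <;>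
    simp [pauli, Fin.sum_univ_four, Matrix.one_apply, Complex.I_mul_I] <;> ring

/-- $S_{2^n⊗2^n} = (1/2^n) ∑ (σ_{i_1}⊗⋯⊗σ_{i_n}) ⊗ (σ_{i_1}⊗⋯⊗σ_{i_n})$. -/
theorem stmt3 (n : ℕ) (hn : 1 ≤ n)
    (S : Matrix ((Fin n → Fin 2) × (Fin n → Fin 2)) ((Fin n → Fin 2) × (Fin n → Fin 2)) ℂ)
    (hS : ∀ a b : (Fin n → Fin 2) → ℂ,
      S.mulVec (fun p => a p.1 * b p.2) = fun p => b p.1 * a p.2) :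
    S = ((1 : ℂ) / 2 ^ n) • ∑ i : Fin n → Fin 4, pauliTens n i ⊗ₖ pauliTens n i := by
  have hSentry : ∀ p q, S p q = if p.1 = q.2 ∧ p.2 = q.1 then 1 else 0 := by
    intro p q
    have h := congrFun (hS (fun u => if u = q.1 then 1 else 0)
      (fun u => if u = q.2 then 1 else 0)) p
    simp only [mulVec, dotProduct] at h
    rw [Fintype.sum_prod_type] at h
    simp [mul_ite, ite_and, Finset.sum_ite_eq'] at h
    rw [h]; by_cases h1 : p.1 = q.2 <;> by_cases h2 : p.2 = q.1 <;> simp [h1, h2]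
  ext p q
  rw [hSentry p q]
  rw [Matrix.smul_apply, Matrix.sum_apply]
  have hterm : ∀ i : Fin n → Fin 4,
      (pauliTens n i ⊗ₖ pauliTens n i) p q =
        ∏ k : Fin n, (pauli (i k) (p.1 k) (q.1 k) * pauli (i k) (p.2 k) (q.2 k)) := by
    intro i
    simp [kroneckerMap_apply, pauliTens, Finset.prod_mul_distrib]
  simp only [hterm]
  rw [← Fintype.piFinset_univ, Finset.sum_prod_piFinset (Finset.univ : Finset (Fin 4))
    (fun (k : Fin n) (j : Fin 4) => pauli j (p.1 k) (q.1 k) * pauli j (p.2 k) (q.2 k))]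
  simp only [pauli_key]
  have hprod : ∏ k : Fin n, (if p.1 k = q.2 k ∧ p.2 k = q.1 k then (2:ℂ) else 0) =
      if p.1 = q.2 ∧ p.2 = q.1 then (2:ℂ)^n else 0 := by
    by_cases h : p.1 = q.2 ∧ p.2 = q.1
    · rw [if_pos h]
      rw [Finset.prod_congr rfl (fun k _ => if_pos ⟨congrFun h.1 k, congrFun h.2 k⟩)]
      simp
    · rw [if_neg h]
      rw [not_and_or] at h
      rcases h with h | h
      · obtain ⟨k, hk⟩ := Function.ne_iff.mp h
        exact Finset.prod_eq_zero (Finset.mem_univ k) (by simp [hk])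
      · obtain ⟨k, hk⟩ := Function.ne_iff.mp h
        exact Finset.prod_eq_zero (Finset.mem_univ k) (by simp [hk])
  rw [hprod]
  have h2 : (2:ℂ)^n ≠ 0 := pow_ne_zero _ two_ne_zero
  by_cases h : p.1 = q.2 ∧ p.2 = q.1 <;> simp [h, smul_eq_mul]
end

section
/- The 9×9 matrix P = (1/3) I₃⊗I₃ + (1/3) ∑_{i=1}^{8} qᵢ⊗qᵢ (with qᵢ the nonions) is a permutation matrix of order 2, i.e., P² = I₉, and P ≠ S_{3⊗3}. -/
open Matrix Kronecker

noncomputable def ω : ℂ := Complex.exp (2 * Real.pi * Complex.I / 3)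

noncomputable def non : Fin 9 → Matrix (Fin 3) (Fin 3) ℂ :=
  ![1,
    !![0, 1, 0; 0, 0, 1; 1, 0, 0],
    !![0, 1, 0; 0, 0, ω; ω ^ 2, 0, 0],
    !![0, 1, 0; 0, 0, ω ^ 2; ω, 0, 0],
    !![0, 0, 1; 1, 0, 0; 0, 1, 0],
    !![0, 0, ω; 1, 0, 0; 0, ω ^ 2, 0],
    !![0, 0, ω ^ 2; 1, 0, 0; 0, ω, 0],
    !![ω, 0, 0; 0, ω ^ 2, 0; 0, 0, 1],
    !![ω ^ 2, 0, 0; 0, ω, 0; 0, 0, 1]]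

lemma hq : ω ^ 2 + ω + 1 = 0 := by
  have h : IsPrimitiveRoot ω 3 := by
    have := Complex.isPrimitiveRoot_exp 3 (by norm_num)
    simpa [ω] using this
  have h3 : ω ^ 3 = 1 := h.pow_eq_one
  have h1 : ω ≠ 1 := h.ne_one (by norm_num)
  have hz : (ω - 1) * (ω ^ 2 + ω + 1) = 0 := by linear_combination h3
  rcases mul_eq_zero.1 hz with h' | h'
  · exact absurd (sub_eq_zero.1 h') h1
  · exact h'

noncomputable def Mp : Matrix (Fin 3 × Fin 3) (Fin 3 × Fin 3) ℂ :=
  Matrix.of fun p q => if q.1 = 1 - p.2 ∧ q.2 = 1 - p.1 then 1 else 0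

set_option maxHeartbeats 2000000 in
lemma key :
    (1 / 3 : ℂ) • ((1 : Matrix (Fin 3) (Fin 3) ℂ) ⊗ₖ (1 : Matrix (Fin 3) (Fin 3) ℂ))
      + (1 / 3 : ℂ) • ∑ i ∈ Finset.univ.erase (0 : Fin 9), non i ⊗ₖ non i = Mp := by
  have he : (Finset.univ.erase (0 : Fin 9)) = {1, 2, 3, 4, 5, 6, 7, 8} := by decide
  have hn1 : non 1 = !![0, 1, 0; 0, 0, 1; 1, 0, 0] := rfl
  have hn2 : non 2 = !![0, 1, 0; 0, 0, ω; ω ^ 2, 0, 0] := rfl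
  have hn3 : non 3 = !![0, 1, 0; 0, 0, ω ^ 2; ω, 0, 0] := rfl
  have hn4 : non 4 = !![0, 0, 1; 1, 0, 0; 0, 1, 0] := rfl
  have hn5 : non 5 = !![0, 0, ω; 1, 0, 0; 0, ω ^ 2, 0] := rfl
  have hn6 : non 6 = !![0, 0, ω ^ 2; 1, 0, 0; 0, ω, 0] := rfl
  have hn7 : non 7 = !![ω, 0, 0; 0, ω ^ 2, 0; 0, 0, 1] := rfl
  have hn8 : non 8 = !![ω ^ 2, 0, 0; 0, ω, 0; 0, 0, 1] := rfl
  rw [he, Finset.sum_insert (by decide), Finset.sum_insert (by decide),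
    Finset.sum_insert (by decide), Finset.sum_insert (by decide),
    Finset.sum_insert (by decide), Finset.sum_insert (by decide),
    Finset.sum_insert (by decide), Finset.sum_singleton,
    hn1, hn2, hn3, hn4, hn5, hn6, hn7, hn8]
  ext ⟨a, b⟩ ⟨c, d⟩
  fin_cases a <;> fin_cases b <;> fin_cases c <;> fin_cases d <;>
    simp only [Matrix.add_apply, Matrix.smul_apply, Matrix.kroneckerMap_apply,
      Matrix.one_apply, Mp, Matrix.of_apply, smul_eq_mul, Matrix.cons_val', Matrix.cons_val_zero,
      Matrix.cons_val_one, Matrix.head_cons, Matrix.head_fin_const, Matrix.cons_val_two,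
      Matrix.tail_cons, Matrix.empty_val', Matrix.cons_val_fin_one, Matrix.head_val'] <;>
    (try norm_num [Fin.ext_iff, Prod.ext_iff, Fin.sub_def]) <;>
    first
      | ring1
      | linear_combination hq
      | linear_combination (1 / 3 : ℂ) * hq
      | linear_combination ((1 - ω + ω ^ 2) / 3) * hq
      | linear_combination (1 - ω + ω ^ 2) * hq
      | linear_combination ((-2 + 2 * ω) / 3) * hq
      | linear_combination ((2 * ω - 2) / 3) * hq

set_option maxHeartbeats 1000000 in
lemma MpMp : Mp * Mp = 1 := by
  ext ⟨a, b⟩ ⟨c, d⟩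
  fin_cases a <;> fin_cases b <;> fin_cases c <;> fin_cases d <;>
    simp [Mp, Matrix.mul_apply, Fintype.sum_prod_type, Fin.sum_univ_succ,
      Matrix.one_apply] <;> norm_num [Prod.ext_iff, Fin.ext_iff]

/-- The nonion sum P is an involutive permutation matrix, and P ≠ S_{3⊗3}. -/
theorem stmt14 :
    ((1 / 3 : ℂ) • ((1 : Matrix (Fin 3) (Fin 3) ℂ) ⊗ₖ (1 : Matrix (Fin 3) (Fin 3) ℂ))
        + (1 / 3 : ℂ) • ∑ i ∈ Finset.univ.erase (0 : Fin 9), non i ⊗ₖ non i)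
      * ((1 / 3 : ℂ) • ((1 : Matrix (Fin 3) (Fin 3) ℂ) ⊗ₖ (1 : Matrix (Fin 3) (Fin 3) ℂ))
        + (1 / 3 : ℂ) • ∑ i ∈ Finset.univ.erase (0 : Fin 9), non i ⊗ₖ non i) = 1
    ∧ ∀ S : Matrix (Fin 3 × Fin 3) (Fin 3 × Fin 3) ℂ,
        (∀ a b : Fin 3 → ℂ,
          S.mulVec (fun p => a p.1 * b p.2) = fun p => b p.1 * a p.2) →
        (1 / 3 : ℂ) • ((1 : Matrix (Fin 3) (Fin 3) ℂ) ⊗ₖ (1 : Matrix (Fin 3) (Fin 3) ℂ))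
          + (1 / 3 : ℂ) • ∑ i ∈ Finset.univ.erase (0 : Fin 9), non i ⊗ₖ non i ≠ S := by
  constructor
  · rw [key]; exact MpMp
  · intro S hS heq
    rw [key] at heq
    have hv := hS (fun k => if k = 0 then 1 else 0) (fun k => if k = 0 then 1 else 0)
    have h1 : S (0, 0) (0, 0) = 1 := by
      have := congrFun hv (0, 0)
      simpa [Matrix.mulVec, dotProduct, Fintype.sum_prod_type, Fin.sum_univ_succ] using this
    have h0 : Mp (0, 0) (0, 0) = 0 := by
      simp [Mp]
    rw [heq] at h0
    rw [h1] at h0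
    exact one_ne_zero h0
end
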